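/- arXiv:2011.11064 — 2 statements merged into one kernel-verified Lean document; each statement's English description precedes it below -/
import Mathlib

section
/- If $p_1 \ell_1 p_2 \ell_2 p_3 \ell_3 p_4 \ell_4 p_1$ is a cycle of length 8 in $D_k(q)$ with $k \ge 4$, then $\ell_1$ is parallel to $\ell_3$ and $\ell_2$ is parallel to $\ell_4$ (where parallel means equal direction parameter $z$). -/
/-- The moment-curve vector `(1, z, z^2, ..., z^(k-1))` in `F^k`. -/
def mvec (k : ℕ) {F : Type} [Field F] (z : F) : Fin k → F := fun j => z ^ (j : ℕ)

/-- The moment-curve line through `x` with direction parameter `z`. -/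
def mline (k : ℕ) {F : Type} [Field F] (x : Fin k → F) (z : F) : Set (Fin k → F) :=
  {p | ∃ y : F, p = x + y • mvec k z}

lemma mline_eq_of_mem {k : ℕ} {F : Type} [Field F] {x q : Fin k → F} {z : F}
    (h : q ∈ mline k x z) : mline k x z = mline k q z := by
  obtain ⟨y0, rfl⟩ := h
  ext w
  constructor
  · rintro ⟨y, rfl⟩; exact ⟨y - y0, by module⟩
  · rintro ⟨y, rfl⟩; exact ⟨y + y0, by module⟩

/-- In any 8-cycle of `D_k(q)` with `k ≥ 4`, opposite lines are parallel. -/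
theorem stmt_13 (k : ℕ) (hk : 4 ≤ k) (F : Type) [Field F] [Fintype F]
    (p : Fin 4 → (Fin k → F)) (hp : Function.Injective p)
    (x : Fin 4 → (Fin k → F)) (z : Fin 4 → F)
    (hLinj : Function.Injective (fun i => mline k (x i) (z i)))
    (hinc : ∀ i, p i ∈ mline k (x i) (z i) ∧ p (i + 1) ∈ mline k (x i) (z i)) :
    z 0 = z 2 ∧ z 1 = z 3 := by
  have key : ∀ i : Fin 4, ∃ d : F, d ≠ 0 ∧ p (i + 1) = p i + d • mvec k (z i) := by
    intro i
    obtain ⟨a, ha⟩ := (hinc i).1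
    obtain ⟨b, hb⟩ := (hinc i).2
    refine ⟨b - a, ?_, ?_⟩
    · intro h0
      have hba : b = a := sub_eq_zero.mp h0
      have hpe : p (i + 1) = p i := by rw [ha, hb, hba]
      have := hp hpe
      have hne : i + 1 ≠ i := by fin_cases i <;> decide
      exact hne this
    · rw [ha, hb]; module
  obtain ⟨d0, hd0, h0⟩ := key 0
  obtain ⟨d1, hd1, h1⟩ := key 1
  obtain ⟨d2, hd2, h2⟩ := key 2
  obtain ⟨d3, hd3, h3⟩ := key 3
  have e01 : ((0 : Fin 4) + 1) = 1 := by decide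
  have e12 : ((1 : Fin 4) + 1) = 2 := by decide
  have e23 : ((2 : Fin 4) + 1) = 3 := by decide
  have e31 : ((3 : Fin 4) + 1) = 0 := by decide
  rw [e01] at h0
  rw [e12] at h1
  rw [e23] at h2
  rw [e31] at h3
  have hsum : d0 • mvec k (z 0) + d1 • mvec k (z 1) + d2 • mvec k (z 2)
      + d3 • mvec k (z 3) = 0 := by
    have e : p 0 + (d0 • mvec k (z 0) + d1 • mvec k (z 1) + d2 • mvec k (z 2)
        + d3 • mvec k (z 3)) = p 0 := by
      conv_rhs => rw [h3, h2, h1, h0]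
      module
    exact add_eq_left.mp e
  have coord : ∀ j : ℕ, j < k →
      d0 * z 0 ^ j + d1 * z 1 ^ j + d2 * z 2 ^ j + d3 * z 3 ^ j = 0 := by
    intro j hj
    have := congrFun hsum ⟨j, hj⟩
    simpa [mvec] using this
  have S0 := coord 0 (by omega)
  have S1 := coord 1 (by omega)
  have S2 := coord 2 (by omega)
  have S3 := coord 3 (by omega)
  have hadj : ∀ i : Fin 4, z i ≠ z (i + 1) := by
    intro i h
    have ha : mline k (x i) (z i) = mline k (p (i + 1)) (z i) :=
      mline_eq_of_mem (hinc i).2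
    have hb : mline k (x (i + 1)) (z (i + 1)) = mline k (p (i + 1)) (z (i + 1)) :=
      mline_eq_of_mem (hinc (i + 1)).1
    have heq : mline k (x i) (z i) = mline k (x (i + 1)) (z (i + 1)) := by
      rw [ha, hb, h]
    have := hLinj heq
    have hne : i ≠ i + 1 := by fin_cases i <;> decide
    exact hne this
  have h01 : z 0 ≠ z 1 := by simpa using hadj 0
  have h12 : z 1 ≠ z 2 := by simpa using hadj 1
  have h23 : z 2 ≠ z 3 := by simpa using hadj 2
  have h30 : z 3 ≠ z 0 := by rw [← e31]; exact hadj 3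
  constructor
  · by_contra h02
    have hz : d0 * ((z 0 - z 1) * ((z 0 - z 2) * (z 0 - z 3))) = 0 := by
      linear_combination S3 - (z 1 + z 2 + z 3) * S2
        + (z 1 * z 2 + z 1 * z 3 + z 2 * z 3) * S1 - (z 1 * z 2 * z 3) * S0
    rcases mul_eq_zero.mp hz with h | h
    · exact hd0 h
    rcases mul_eq_zero.mp h with h | h
    · exact h01 (sub_eq_zero.mp h)
    rcases mul_eq_zero.mp h with h | h
    · exact h02 (sub_eq_zero.mp h)
    · exact h30 (sub_eq_zero.mp h).symm
  · by_contra h13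
    have hz : d1 * ((z 1 - z 0) * ((z 1 - z 2) * (z 1 - z 3))) = 0 := by
      linear_combination S3 - (z 0 + z 2 + z 3) * S2
        + (z 0 * z 2 + z 0 * z 3 + z 2 * z 3) * S1 - (z 0 * z 2 * z 3) * S0
    rcases mul_eq_zero.mp hz with h | h
    · exact hd1 h
    rcases mul_eq_zero.mp h with h | h
    · exact h01 (sub_eq_zero.mp h).symm
    rcases mul_eq_zero.mp h with h | h
    · exact h12 (sub_eq_zero.mp h)
    · exact h13 (sub_eq_zero.mp h)
end

section
/- For $k = 2, 3, 5$, the incidence graph $D_k(q)$ is a bipartite graph between two sets of size $n = q^k$ with exactly $n^{1+1/k} = q^{k+1}$ edges containing no cycle of length $2k$. -/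
section Aux

variable {k : ℕ} {F : Type} [Field F]

lemma mem_mline_self (x : Fin k → F) (z : F) : x ∈ mline k x z :=
  ⟨0, by simp⟩

lemma mline_shift {p x : Fin k → F} {z : F} (h : p ∈ mline k x z) :
    mline k p z = mline k x z := by
  obtain ⟨y, rfl⟩ := h
  ext q
  constructor
  · rintro ⟨y', rfl⟩; exact ⟨y + y', by module⟩
  · rintro ⟨y', rfl⟩; exact ⟨y' - y, by module⟩

lemma mline_diff (hk : 2 ≤ k) {p q x : Fin k → F} {z : F}
    (hp : p ∈ mline k x z) (hq : q ∈ mline k x z) :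
    p - q = (p ⟨0, by omega⟩ - q ⟨0, by omega⟩) • mvec k z := by
  obtain ⟨y, rfl⟩ := hp
  obtain ⟨y', rfl⟩ := hq
  have : (x + y • mvec k z) ⟨0, by omega⟩ - (x + y' • mvec k z) ⟨0, by omega⟩ = y - y' := by
    simp [mvec]
  rw [this]
  module

lemma mvec_inj (hk : 2 ≤ k) {z z' : F} (h : mvec k z = mvec k z') : z = z' := by
  have := congrFun h ⟨1, by omega⟩
  simpa [mvec] using this

lemma mline_z_inj (hk : 2 ≤ k) {x : Fin k → F} {z z' : F}
    (h : mline k x z = mline k x z') : z = z' := by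
  have hmem : x + (1:F) • mvec k z ∈ mline k x z' := by
    rw [← h]; exact ⟨1, rfl⟩
  obtain ⟨y, hy⟩ := hmem
  have h0 : (1:F) = y := by
    have := congrFun hy ⟨0, by omega⟩
    simpa [mvec] using this
  apply mvec_inj hk
  have h1 : (1:F) • mvec k z = y • mvec k z' := add_left_cancel hy
  rw [← h0, one_smul, one_smul] at h1
  exact h1

lemma canon_inj (hk : 2 ≤ k) {x x' : Fin k → F} {z z' : F}
    (h0 : x ⟨0, by omega⟩ = 0) (h0' : x' ⟨0, by omega⟩ = 0)
    (h : mline k x z = mline k x' z') : x = x' ∧ z = z' := by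
  have hx : x ∈ mline k x' z' := h ▸ mem_mline_self x z
  obtain ⟨y, hy⟩ := hx
  have hy0 : y = 0 := by
    have := congrFun hy ⟨0, by omega⟩
    simp [h0, h0', mvec] at this
    exact this.symm
  rw [hy0] at hy
  simp at hy
  subst hy
  exact ⟨rfl, mline_z_inj hk h⟩

lemma line_count (hk : 2 ≤ k) [Fintype F] :
    Set.ncard {L : Set (Fin k → F) | ∃ x z, L = mline k x z} = Fintype.card F ^ k := by
  set i0 : Fin k := ⟨0, by omega⟩ with hi0
  set ψ : (Fin k → F) → Set (Fin k → F) :=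
    fun w => mline k (Function.update w i0 0) (w i0) with hψ
  have hinj : Function.Injective ψ := by
    intro w w' h
    have h0 : Function.update w i0 0 i0 = 0 := by simp
    have h0' : Function.update w' i0 0 i0 = 0 := by simp
    obtain ⟨heq, hz⟩ := canon_inj hk h0 h0' h
    funext j
    by_cases hj : j = i0
    · subst hj; exact hz
    · have := congrFun heq j
      simpa [Function.update_of_ne hj] using this
  have hrange : {L : Set (Fin k → F) | ∃ x z, L = mline k x z} = Set.range ψ := by
    ext L
    constructor
    · rintro ⟨x, z, rfl⟩
      refine ⟨Function.update (x - x i0 • mvec k z) i0 z, ?_⟩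
      have hv0 : (x - x i0 • mvec k z) i0 = 0 := by
        simp [mvec, hi0]
      simp only [hψ, Function.update_self, Function.update_idem]
      rw [show Function.update (x - x i0 • mvec k z) i0 0
            = Function.update (x - x i0 • mvec k z) i0 ((x - x i0 • mvec k z) i0) by rw [hv0],
          Function.update_eq_self]
      exact mline_shift ⟨-(x i0), by module⟩
    · rintro ⟨w, rfl⟩
      exact ⟨_, _, rfl⟩
  rw [hrange, ← Nat.card_coe_set_eq, Nat.card_range_of_injective hinj]
  simp

lemma edge_count (hk : 2 ≤ k) [Fintype F] :
    Set.ncard {e : (Fin k → F) × Set (Fin k → F) |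
      (∃ x z, e.2 = mline k x z) ∧ e.1 ∈ e.2} = Fintype.card F ^ (k + 1) := by
  set ψ : (Fin k → F) × F → (Fin k → F) × Set (Fin k → F) :=
    fun pz => (pz.1, mline k pz.1 pz.2) with hψ
  have hinj : Function.Injective ψ := by
    rintro ⟨p, z⟩ ⟨p', z'⟩ h
    simp only [hψ, Prod.mk.injEq] at h
    obtain ⟨rfl, h2⟩ := h
    exact Prod.ext rfl (mline_z_inj hk h2)
  have hrange : {e : (Fin k → F) × Set (Fin k → F) |
      (∃ x z, e.2 = mline k x z) ∧ e.1 ∈ e.2} = Set.range ψ := by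
    ext ⟨p, L⟩
    constructor
    · rintro ⟨⟨x, z, rfl⟩, hp⟩
      exact ⟨(p, z), by simp [hψ, mline_shift hp]⟩
    · rintro ⟨⟨p', z⟩, h⟩
      cases h
      exact ⟨⟨p', z, rfl⟩, mem_mline_self _ _⟩
  rw [hrange, ← Nat.card_coe_set_eq, Nat.card_range_of_injective hinj]
  simp [pow_succ, mul_comm]

open Polynomial Finset in
lemma poly_sum (c z : Fin k → F) (h : ∀ m : Fin k, ∑ i, c i * z i ^ (m : ℕ) = 0)
    (P : Polynomial F) (hP : P.natDegree < k) : ∑ i, c i * P.eval (z i) = 0 := by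
  have heval : ∀ x : F, P.eval x = ∑ j ∈ range k, P.coeff j * x ^ j :=
    fun x => eval_eq_sum_range' hP x
  calc ∑ i, c i * P.eval (z i)
      = ∑ i, ∑ j ∈ range k, P.coeff j * (c i * z i ^ j) := by
        refine Finset.sum_congr rfl fun i _ => ?_
        rw [heval, Finset.mul_sum]
        exact Finset.sum_congr rfl fun j _ => by ring
    _ = ∑ j ∈ range k, P.coeff j * ∑ i, c i * z i ^ j := by
        rw [Finset.sum_comm]
        exact Finset.sum_congr rfl fun j _ => by rw [Finset.mul_sum]
    _ = 0 := by
        refine Finset.sum_eq_zero fun j hj => ?_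
        rw [h ⟨j, Finset.mem_range.1 hj⟩, mul_zero]

open Polynomial Finset in
lemma no_rel (c z : Fin k → F) (hc : ∀ i, c i ≠ 0)
    (hsum : ∀ m : Fin k, ∑ i, c i * z i ^ (m : ℕ) = 0)
    (i0 : Fin k) (hfib : ∀ j, z j = z i0 → j = i0) : False := by
  classical
  set S : Finset (Fin k) := univ.filter (fun j => z j ≠ z i0) with hS
  set P : Polynomial F := ∏ j ∈ S, (X - C (z j)) with hPdef
  have hdeg : P.natDegree < k := by
    have h1 : P.natDegree = S.card := by
      rw [hPdef, natDegree_prod]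
      · simp
      · intro j _; exact X_sub_C_ne_zero (z j)
    have h2 : S ⊂ univ := by
      refine Finset.ssubset_univ_iff.2 fun he => ?_
      have : i0 ∈ S := he ▸ Finset.mem_univ i0
      simp [hS] at this
    have := Finset.card_lt_card h2
    simpa [h1] using this
  have h0 := poly_sum c z hsum P hdeg
  have hsplit : ∑ i, c i * P.eval (z i)
      = ∑ i ∈ univ.filter (fun j => z j = z i0), c i * P.eval (z i) := by
    rw [← Finset.sum_filter_add_sum_filter_not univ (fun j => z j = z i0)]
    have : ∑ i ∈ univ.filter (fun j => ¬ z j = z i0), c i * P.eval (z i) = 0 := by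
      refine Finset.sum_eq_zero fun i hi => ?_
      have hiS : i ∈ S := by simpa [hS] using hi
      have : P.eval (z i) = 0 := by
        rw [hPdef, eval_prod]
        exact Finset.prod_eq_zero hiS (by simp)
      rw [this, mul_zero]
    rw [this, add_zero]
  have hfil : univ.filter (fun j => z j = z i0) = {i0} := by
    ext j
    simp only [Finset.mem_filter, Finset.mem_univ, true_and, Finset.mem_singleton]
    exact ⟨fun h => hfib j h, fun h => h ▸ rfl⟩
  rw [hsplit, hfil, Finset.sum_singleton] at h0
  have hPne : P.eval (z i0) ≠ 0 := by
    rw [hPdef, eval_prod]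
    refine Finset.prod_ne_zero_iff.2 fun j hj => ?_
    have : z j ≠ z i0 := by simpa [hS] using hj
    simp [sub_eq_zero]
    exact fun h => this h.symm
  exact hc i0 (by
    rcases mul_eq_zero.1 h0 with h | h
    · exact h
    · exact absurd h hPne)

omit [Field F] in
lemma fiber2 (z : Fin 2 → F) (hz : ∀ i : Fin 2, z i ≠ z (i + 1)) :
    ∃ i, ∀ j, z j = z i → j = i := by
  refine ⟨0, fun j hj => ?_⟩
  have hcase : ∀ j : Fin 2, j = 0 ∨ j = 1 := by decide
  rcases hcase j with rfl | rfl
  · rfl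
  · exact absurd hj (hz 1)

omit [Field F] in
lemma fiber3 (z : Fin 3 → F) (hz : ∀ i : Fin 3, z i ≠ z (i + 1)) :
    ∃ i, ∀ j, z j = z i → j = i := by
  refine ⟨0, fun j hj => ?_⟩
  have hcase : ∀ j : Fin 3, j = 0 ∨ j = 1 ∨ j = 2 := by decide
  rcases hcase j with rfl | rfl | rfl
  · rfl
  · exact absurd hj.symm (hz 0)
  · exact absurd hj (hz 2)

omit [Field F] in
lemma fiber5 (z : Fin 5 → F) (hz : ∀ i : Fin 5, z i ≠ z (i + 1)) :
    ∃ i, ∀ j, z j = z i → j = i := by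
  have h01 : z 0 ≠ z 1 := hz 0
  have h12 : z 1 ≠ z 2 := hz 1
  have h23 : z 2 ≠ z 3 := hz 2
  have h34 : z 3 ≠ z 4 := hz 3
  have h40 : z 4 ≠ z 0 := hz 4
  have hcase : ∀ j : Fin 5, j = 0 ∨ j = 1 ∨ j = 2 ∨ j = 3 ∨ j = 4 := by decide
  by_contra h
  push_neg at h
  obtain ⟨j, hj, hjne⟩ := h 0
  rcases hcase j with rfl | rfl | rfl | rfl | rfl
  · exact hjne rfl
  · exact h01 hj.symm
  · -- z 2 = z 0
    obtain ⟨j', hj', hjne'⟩ := h 1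
    rcases hcase j' with rfl | rfl | rfl | rfl | rfl
    · exact h01 hj'
    · exact hjne' rfl
    · exact h12 hj'.symm
    · -- z 3 = z 1
      obtain ⟨j4, hj4, hjne4⟩ := h 4
      rcases hcase j4 with rfl | rfl | rfl | rfl | rfl
      · exact h40 hj4.symm
      · exact h34 (hj'.trans hj4)
      · exact h40 (hj.symm.trans hj4).symm
      · exact h34 hj4
      · exact hjne4 rfl
    · -- z 4 = z 1
      obtain ⟨j3, hj3, hjne3⟩ := h 3
      rcases hcase j3 with rfl | rfl | rfl | rfl | rfl
      · exact h23 (hj.trans hj3)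
      · exact h34 (hj'.trans hj3).symm
      · exact h23 hj3
      · exact hjne3 rfl
      · exact h34 hj3.symm
  · -- z 3 = z 0
    obtain ⟨j4, hj4, hjne4⟩ := h 4
    rcases hcase j4 with rfl | rfl | rfl | rfl | rfl
    · exact h40 hj4.symm
    · -- z 1 = z 4
      obtain ⟨j2, hj2, hjne2⟩ := h 2
      rcases hcase j2 with rfl | rfl | rfl | rfl | rfl
      · exact h23 (hj.trans hj2).symm
      · exact h12 hj2
      · exact hjne2 rfl
      · exact h23 hj2.symm
      · exact h12 (hj4.trans hj2)
    · -- z 2 = z 4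
      obtain ⟨j1, hj1, hjne1⟩ := h 1
      rcases hcase j1 with rfl | rfl | rfl | rfl | rfl
      · exact h01 hj1
      · exact hjne1 rfl
      · exact h12 hj1.symm
      · exact h01 (hj.symm.trans hj1)
      · exact h12 (hj1.symm.trans hj4.symm)
    · exact h34 hj4
    · exact hjne4 rfl
  · exact h40 hj

end Aux

/-- For `k = 2, 3, 5`, `D_k(q)` is a bipartite graph between two sets of size
`q^k` with exactly `q^(k+1)` edges and no cycle of length `2k`. -/
theorem stmt_14 (k : ℕ) [NeZero k] (hk : k = 2 ∨ k = 3 ∨ k = 5) (F : Type) [Field F] [Fintype F] :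
    Set.ncard {L : Set (Fin k → F) | ∃ x z, L = mline k x z} = Fintype.card F ^ k ∧
    Set.ncard {e : (Fin k → F) × Set (Fin k → F) |
      (∃ x z, e.2 = mline k x z) ∧ e.1 ∈ e.2} = Fintype.card F ^ (k + 1) ∧
    ¬ ∃ (p : Fin k → (Fin k → F)) (L : Fin k → Set (Fin k → F)),
        Function.Injective p ∧ Function.Injective L ∧
        (∀ i, ∃ x z, L i = mline k x z) ∧
        (∀ i, p i ∈ L i ∧ p (i + 1) ∈ L i) := by
  have hk2 : 2 ≤ k := by rcases hk with rfl | rfl | rfl <;> norm_num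
  refine ⟨line_count hk2, edge_count hk2, ?_⟩
  rintro ⟨p, L, hpinj, hLinj, hLex, hinc⟩
  choose x zf hLz using hLex
  have hne1 : ∀ i : Fin k, i + 1 ≠ i := by
    intro i he
    have h1 : i + 1 = i + 0 := by simpa using he
    have h2 : (1 : Fin k) = 0 := add_left_cancel h1
    have h3 : k = 1 := Fin.one_eq_zero_iff.1 h2
    omega
  set c : Fin k → F := fun i => p (i + 1) ⟨0, by omega⟩ - p i ⟨0, by omega⟩ with hcdef
  have hdiff : ∀ i, p (i + 1) - p i = c i • mvec k (zf i) := fun i =>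
    mline_diff hk2 ((hLz i) ▸ (hinc i).2) ((hLz i) ▸ (hinc i).1)
  have hcne : ∀ i, c i ≠ 0 := by
    intro i h0
    have hpe : p (i + 1) - p i = 0 := by rw [hdiff i, h0, zero_smul]
    exact hne1 i (hpinj (sub_eq_zero.1 hpe))
  have hzz : ∀ i, zf i ≠ zf (i + 1) := by
    intro i he
    have e1 : L i = mline k (p (i + 1)) (zf i) := by
      rw [hLz i]; exact (mline_shift ((hLz i) ▸ (hinc i).2)).symm
    have e2 : L (i + 1) = mline k (p (i + 1)) (zf (i + 1)) := by
      rw [hLz (i + 1)]; exact (mline_shift ((hLz (i + 1)) ▸ (hinc (i + 1)).1)).symm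
    have : L i = L (i + 1) := by rw [e1, e2, he]
    exact hne1 i (hLinj this).symm
  have hsum0 : ∑ i, c i • mvec k (zf i) = 0 := by
    have ht : ∑ i : Fin k, (p (i + 1) - p i) = 0 := by
      rw [Finset.sum_sub_distrib, sub_eq_zero]
      exact Fintype.sum_equiv (Equiv.addRight (1 : Fin k)) _ _ (fun i => rfl)
    calc ∑ i, c i • mvec k (zf i) = ∑ i : Fin k, (p (i + 1) - p i) :=
          Finset.sum_congr rfl fun i _ => (hdiff i).symm
      _ = 0 := ht
  have hsum : ∀ m : Fin k, ∑ i, c i * zf i ^ (m : ℕ) = 0 := by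
    intro m
    have := congrFun hsum0 m
    simpa [Finset.sum_apply, mvec, Pi.smul_apply, smul_eq_mul] using this
  have hfib : ∃ i0, ∀ j, zf j = zf i0 → j = i0 := by
    rcases hk with rfl | rfl | rfl
    · exact fiber2 zf hzz
    · exact fiber3 zf hzz
    · exact fiber5 zf hzz
  obtain ⟨i0, hfib⟩ := hfib
  exact no_rel c zf hcne hsum i0 hfib
end
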